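/- Let δ be a limit ordinal, N an R-module, and (M_i)_{i<δ} an increasing chain of submodules of N with N = ⋃_{i<δ} M_i. Then the kernel of the canonical surjective R-homomorphism f : ⊕_{i<δ} M_i → N given by (m_i)_{i<δ} ↦ ∑_{i<δ} m_i is a pure submodule of ⊕_{i<δ} M_i (equivalently, f is a pure epimorphism). -/

import Mathlib

universe u v w

/-- `A` is a pure submodule of its ambient module: every finite system of
`R`-linear equations `∑ j, r i j • x j = a i` with constants `a i ∈ A` that has
a solution in the ambient module has a solution in `A`. -/
def IsPureSubmodule {R : Type*} [Ring R] {M : Type*} [AddCommGroup M] [Module R M]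
    (A : Submodule R M) : Prop :=
  ∀ (m n : ℕ) (r : Fin m → Fin n → R) (a : Fin m → M),
    (∀ i, a i ∈ A) →
    (∃ x : Fin n → M, ∀ i, (∑ j, r i j • x j) = a i) →
    ∃ x : Fin n → M, (∀ j, x j ∈ A) ∧ ∀ i, (∑ j, r i j • x j) = a i

/-!
A submodule is pure as soon as any finitely many elements of the ambient module lie in a
submodule that retracts linearly onto it. The kernel of `f : ⨁ i, M i → N` has this property:
by directedness finitely many elements of the direct sum have images in a single `M k`, and on
`f⁻¹(M k)` the map `y ↦ y - lof k (f y)` is a linear retraction onto `ker f`.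
-/

theorem isPureSubmodule_of_exists_retraction {R M : Type*} [Ring R] [AddCommGroup M]
    [Module R M] {A : Submodule R M}
    (h : ∀ (n : ℕ) (x : Fin n → M), ∃ (P : Submodule R M) (p : P →ₗ[R] M),
      (∀ j, x j ∈ P) ∧ (∀ y, p y ∈ A) ∧ ∀ y : P, (y : M) ∈ A → p y = y) :
    IsPureSubmodule A := by
  rintro m n r a ha ⟨x, hx⟩
  obtain ⟨P, p, hxP, hpA, hp⟩ := h n x
  refine ⟨fun j => p ⟨x j, hxP j⟩, fun j => hpA _, fun i => ?_⟩
  have haP : a i ∈ P := hx i ▸ sum_mem fun j _ => P.smul_mem _ (hxP j)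
  have hsum : (∑ j, r i j • (⟨x j, hxP j⟩ : P)) = ⟨a i, haP⟩ := by
    ext; simp [hx i]
  calc ∑ j, r i j • p ⟨x j, hxP j⟩ = p (∑ j, r i j • (⟨x j, hxP j⟩ : P)) := by
        simp only [map_sum, map_smul]
    _ = a i := by rw [hsum, hp _ (ha i)]

namespace DirectSum

variable {R N ι : Type*} [Ring R] [AddCommGroup N] [Module R N] [DecidableEq ι]
  (M : ι → Submodule R N)

noncomputable def kerRetraction (k : ι) :
    (M k).comap (coeLinearMap M) →ₗ[R] ⨁ i, M i :=
  Submodule.subtype _ - lof R ι (fun i => M i) k ∘ₗ (coeLinearMap M).restrict fun _ hx => hx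

theorem coeLinearMap_kerRetraction (k : ι) (y : (M k).comap (coeLinearMap M)) :
    coeLinearMap M (kerRetraction M k y) = 0 := by
  simp [kerRetraction]

theorem kerRetraction_of_mem_ker (k : ι) (y : (M k).comap (coeLinearMap M))
    (hy : (y : ⨁ i, M i) ∈ LinearMap.ker (coeLinearMap M)) : kerRetraction M k y = y := by
  have hy' : (coeLinearMap M).restrict (fun _ hx => hx) y = (0 : M k) := Subtype.ext hy
  simp [kerRetraction, hy']

variable {M}

theorem surjective_coeLinearMap (hM : ⨆ i, M i = ⊤) : Function.Surjective (coeLinearMap M) :=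
  LinearMap.range_eq_top.mp (range_coeLinearMap.trans hM)

theorem isPureSubmodule_ker_coeLinearMap (hdir : Directed (· ≤ ·) M) (hM : ⨆ i, M i = ⊤) :
    IsPureSubmodule (LinearMap.ker (coeLinearMap M)) := by
  rcases isEmpty_or_nonempty ι with hι | hι
  · rintro m n r a - ⟨x, hx⟩
    exact ⟨x, fun j => Subsingleton.elim (x j) 0 ▸ zero_mem _, hx⟩
  refine isPureSubmodule_of_exists_retraction fun n x => ?_
  have hmem : ∀ j, ∃ i, coeLinearMap M (x j) ∈ M i := fun j =>
    (Submodule.mem_iSup_of_directed M hdir).mp (hM ▸ Submodule.mem_top)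
  choose i hi using hmem
  obtain ⟨k, hk⟩ := hdir.finite_le i
  exact ⟨_, kerRetraction M k, fun j => hk j (hi j), coeLinearMap_kerRetraction M k,
    kerRetraction_of_mem_ker M k⟩

end DirectSum

theorem stmt5 {R : Type u} [Ring R] {N : Type v} [AddCommGroup N] [Module R N]
    (δ : Ordinal.{w})
    (M : {o : Ordinal.{w} // o < δ} → Submodule R N)
    (hmono : ∀ i j : {o : Ordinal.{w} // o < δ}, i.1 ≤ j.1 → M i ≤ M j)
    (hunion : (⨆ i, M i) = ⊤) :
    -- the canonical map `⊕_{i<δ} M_i → N`, `(m_i) ↦ ∑ m_i`, is surjective and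
    -- its kernel is a pure submodule of `⊕_{i<δ} M_i`
    Function.Surjective
      (DirectSum.toModule R {o : Ordinal.{w} // o < δ} N (fun i => (M i).subtype)) ∧
    IsPureSubmodule
      (LinearMap.ker
        (DirectSum.toModule R {o : Ordinal.{w} // o < δ} N (fun i => (M i).subtype))) :=
  ⟨DirectSum.surjective_coeLinearMap hunion,
    DirectSum.isPureSubmodule_ker_coeLinearMap (Monotone.directed_le hmono) hunion⟩
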